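/- Let f be a real-valued function on the space of m×n real matrices equipped with the Frobenius inner product ⟪A, B⟫_F = tr(AᵀB), such that f has gradient ∇f(W) at every W and ∇f is Lipschitz with constant L > 0 in the Frobenius norm. Let W be an m×n real matrix, set G := ∇f(W), and assume GᵀG is positive definite with unique symmetric positive semidefinite square root S; set N := tr(S). Then for every γ > 0, f(W − γ N G S⁻¹) ≤ f(W) − γ(1 − (Lγ/2) n) · N². In particular, if 0 < γ < 2/(L n) then f(W − γ N G S⁻¹) ≤ f(W). -/

import Mathlib

/-!
With `Q = G S⁻¹` we have `GᵀQ = S` and, `S` being symmetric, `QᵀQ = 1`; hence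
`⟪G, Q⟫_F = tr S = N` and `‖Q‖_F² = tr 1 = n`. The descent lemma
`f (W + D) ≤ f W + ⟪G, D⟫_F + L/2 ‖D‖_F²` at `D = -γN Q` gives the bound, whose correction
term is nonnegative once `γ L n < 2`.
-/

open Matrix
open scoped RealInnerProductSpace

noncomputable section

/-- The Frobenius inner product `⟪A, B⟫_F = tr(AᵀB)` on `m×n` real matrices,
packaged as an `InnerProductSpace.Core`. -/
def frobeniusCore (m n : ℕ) :
    InnerProductSpace.Core ℝ (Matrix (Fin m) (Fin n) ℝ) where
  inner A B := (Aᵀ * B).trace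
  conj_inner_symm := by
    intro x y
    have h : (yᵀ * x).trace = (xᵀ * y).trace := by
      rw [← Matrix.trace_transpose (yᵀ * x), Matrix.transpose_mul,
        Matrix.transpose_transpose]
    simpa using h
  re_inner_nonneg := by
    intro x
    have h : (xᵀ * x).trace = ∑ j, ∑ i, x i j * x i j := by
      simp [Matrix.trace, Matrix.diag, Matrix.mul_apply]
    have h' : (0 : ℝ) ≤ (xᵀ * x).trace := by
      rw [h]
      exact Finset.sum_nonneg fun j _ => Finset.sum_nonneg fun i _ => mul_self_nonneg _
    simpa using h'
  add_left := by
    intro x y z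
    simp [Matrix.transpose_add, Matrix.add_mul]
  smul_left := by
    intro x y r
    simp [Matrix.transpose_smul, Matrix.smul_mul]
  definite := by
    intro x hx
    have h : ∑ j, ∑ i, x i j * x i j = 0 := by
      have h' : (xᵀ * x).trace = ∑ j, ∑ i, x i j * x i j := by
        simp [Matrix.trace, Matrix.diag, Matrix.mul_apply]
      rw [← h']
      simpa using hx
    ext i j
    have hj : ∀ j' ∈ Finset.univ, (0 : ℝ) ≤ ∑ i', x i' j' * x i' j' :=
      fun j' _ => Finset.sum_nonneg fun i' _ => mul_self_nonneg _
    have h3 : ∑ i', x i' j * x i' j = 0 :=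
      (Finset.sum_eq_zero_iff_of_nonneg hj).mp h j (Finset.mem_univ j)
    have h4 : x i j * x i j = 0 :=
      (Finset.sum_eq_zero_iff_of_nonneg fun i' _ => mul_self_nonneg _).mp h3 i
        (Finset.mem_univ i)
    simpa using mul_self_eq_zero.mp h4

/-- `m×n` real matrices as a normed group under the Frobenius norm. -/
instance (m n : ℕ) : NormedAddCommGroup (Matrix (Fin m) (Fin n) ℝ) :=
  (frobeniusCore m n).toNormedAddCommGroup

/-- `m×n` real matrices with the Frobenius inner product. -/
instance (m n : ℕ) : InnerProductSpace ℝ (Matrix (Fin m) (Fin n) ℝ) :=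
  InnerProductSpace.ofCore (frobeniusCore m n).toCore

instance (m n : ℕ) : CompleteSpace (Matrix (Fin m) (Fin n) ℝ) :=
  FiniteDimensional.complete ℝ _

section DescentLemma

variable {F : Type*} [NormedAddCommGroup F] [InnerProductSpace ℝ F]
  {f : F → ℝ} {g : F → F} {L : ℝ} {x d : F}

theorem HasGradientAt.hasDerivAt_comp_add_smul [CompleteSpace F] {f' : F} {t : ℝ}
    (hf : HasGradientAt f f' (x + t • d)) :
    HasDerivAt (fun s : ℝ => f (x + s • d)) ⟪f', d⟫ t := by
  have hline : HasDerivAt (fun s : ℝ => x + s • d) d t := by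
    simpa using ((hasDerivAt_id t).smul_const d).const_add x
  have := hf.hasFDerivAt.comp_hasDerivAt t hline
  simp only [InnerProductSpace.toDual_apply_apply] at this
  exact this

theorem inner_sub_le_mul_norm_sq_of_lipschitz {t : ℝ} (ht : 0 ≤ t)
    (hlip : ∀ y, ‖g y - g x‖ ≤ L * ‖y - x‖) :
    ⟪g (x + t • d) - g x, d⟫ ≤ L * t * ‖d‖ ^ 2 :=
  calc ⟪g (x + t • d) - g x, d⟫ ≤ ‖g (x + t • d) - g x‖ * ‖d‖ := real_inner_le_norm _ _
    _ ≤ L * ‖x + t • d - x‖ * ‖d‖ := by gcongr; exact hlip _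
    _ = L * t * ‖d‖ ^ 2 := by
      rw [add_sub_cancel_left, norm_smul, Real.norm_of_nonneg ht]; ring

theorem le_add_inner_add_sq_of_lipschitz_gradient [CompleteSpace F]
    (hgrad : ∀ y, HasGradientAt f (g y) y)
    (hlip : ∀ y, ‖g y - g x‖ ≤ L * ‖y - x‖) (d : F) :
    f (x + d) ≤ f x + ⟪g x, d⟫ + L / 2 * ‖d‖ ^ 2 := by
  set φ : ℝ → ℝ := fun t => f (x + t • d) - t * ⟪g x, d⟫ - L * t ^ 2 / 2 * ‖d‖ ^ 2
  have hφ : ∀ t, HasDerivAt φ (⟪g (x + t • d), d⟫ - ⟪g x, d⟫ - L * t * ‖d‖ ^ 2) t := by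
    intro t
    have hline := (hgrad (x + t • d)).hasDerivAt_comp_add_smul
    have hlin := (hasDerivAt_id t).mul_const ⟪g x, d⟫
    have hquad := (((hasDerivAt_pow 2 t).const_mul L).div_const 2).mul_const (‖d‖ ^ 2)
    exact ((hline.sub hlin).sub hquad).congr_deriv (by push_cast; ring)
  have hanti : AntitoneOn φ (Set.Ici 0) := by
    refine antitoneOn_of_hasDerivWithinAt_nonpos (convex_Ici 0)
      (fun t _ => (hφ t).continuousAt.continuousWithinAt)
      (fun t _ => (hφ t).hasDerivWithinAt) fun t ht => ?_
    rw [interior_Ici] at ht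
    have := inner_sub_le_mul_norm_sq_of_lipschitz (d := d) ht.le hlip
    rw [inner_sub_left] at this
    linarith
  have h10 : φ 1 ≤ φ 0 := hanti Set.self_mem_Ici (Set.mem_Ici.mpr zero_le_one) zero_le_one
  simp only [φ, one_smul, zero_smul, add_zero] at h10
  linarith

end DescentLemma

section PolarFactor

variable {R : Type*} [CommRing R] {m n : Type*} [Fintype m] [Fintype n] [DecidableEq n]
  {G : Matrix m n R} {S : Matrix n n R}

theorem Matrix.transpose_mul_mul_inv_of_mul_self_eq (hS : IsUnit S.det)
    (hSsq : S * S = Gᵀ * G) : Gᵀ * (G * S⁻¹) = S := by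
  rw [← Matrix.mul_assoc, ← hSsq, Matrix.mul_assoc, mul_nonsing_inv S hS, Matrix.mul_one]

theorem Matrix.transpose_mul_self_mul_inv_eq_one (hSt : Sᵀ = S) (hS : IsUnit S.det)
    (hSsq : S * S = Gᵀ * G) : (G * S⁻¹)ᵀ * (G * S⁻¹) = 1 := by
  rw [transpose_mul, transpose_nonsing_inv, hSt, Matrix.mul_assoc,
    transpose_mul_mul_inv_of_mul_self_eq hS hSsq, nonsing_inv_mul S hS]

end PolarFactor

theorem matrix_inner_eq_trace {m n : ℕ} (A B : Matrix (Fin m) (Fin n) ℝ) :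
    ⟪A, B⟫ = (Aᵀ * B).trace :=
  rfl

theorem matrix_norm_sq_eq_of_transpose_mul_self_eq_one {m n : ℕ}
    {Q : Matrix (Fin m) (Fin n) ℝ} (hQ : Qᵀ * Q = 1) : ‖Q‖ ^ 2 = n := by
  rw [← real_inner_self_eq_norm_sq, matrix_inner_eq_trace, hQ, trace_one, Fintype.card_fin]

theorem descent_lemma_nuclear_scaled_polargrad_general
    {m n : ℕ} (f : Matrix (Fin m) (Fin n) ℝ → ℝ)
    (gradf : Matrix (Fin m) (Fin n) ℝ → Matrix (Fin m) (Fin n) ℝ)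
    (L : ℝ)
    (hgrad : ∀ W, HasGradientAt f (gradf W) W)
    (hlip : ∀ X Y, ‖gradf X - gradf Y‖ ≤ L * ‖X - Y‖)
    (W G : Matrix (Fin m) (Fin n) ℝ) (hG : G = gradf W)
    (hpd : (Gᵀ * G).PosDef)
    (S : Matrix (Fin n) (Fin n) ℝ) (hS : S.PosSemidef) (hSsq : S * S = Gᵀ * G)
    (N : ℝ) (hN : N = S.trace) :
    ∀ γ : ℝ, 0 < γ →
      f (W - (γ * N) • (G * S⁻¹)) ≤ f W - γ * (1 - L * γ / 2 * (n : ℝ)) * N ^ 2 ∧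
      (γ < 2 / (L * (n : ℝ)) → f (W - (γ * N) • (G * S⁻¹)) ≤ f W) := by
  intro γ hγ
  have hSdet : IsUnit S.det :=
    (isUnit_iff_isUnit_det S).mp (isUnit_of_mul_isUnit_left (hSsq ▸ hpd.isUnit))
  have hinner : ⟪gradf W, G * S⁻¹⟫ = N := by
    rw [← hG, matrix_inner_eq_trace, transpose_mul_mul_inv_of_mul_self_eq hSdet hSsq, hN]
  have hnorm : ‖G * S⁻¹‖ ^ 2 = n :=
    matrix_norm_sq_eq_of_transpose_mul_self_eq_one
      (transpose_mul_self_mul_inv_eq_one hS.1 hSdet hSsq)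
  have hdescent : f (W - (γ * N) • (G * S⁻¹)) ≤ f W - γ * (1 - L * γ / 2 * n) * N ^ 2 := by
    have := le_add_inner_add_sq_of_lipschitz_gradient hgrad (fun Y => hlip Y W)
      (-((γ * N) • (G * S⁻¹)))
    rw [← sub_eq_add_neg, inner_neg_right, real_inner_smul_right, hinner, norm_neg, norm_smul,
      mul_pow, Real.norm_eq_abs, sq_abs, hnorm] at this
    linarith
  refine ⟨hdescent, fun hγL => hdescent.trans (sub_le_self _ ?_)⟩
  have hstep : 0 ≤ 1 - L * γ / 2 * n := by
    rcases le_or_gt (L * n) 0 with hLn | hLn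
    · nlinarith
    · nlinarith [(lt_div_iff₀ hLn).mp hγL]
  positivity

/-- Descent lemma for the nuclear-norm-scaled polar update:
if `f` has an `L`-Lipschitz Frobenius gradient, `G = ∇f(W)` has `GᵀG` positive
definite with unique symmetric psd square root `S`, and `N = tr S`, then for
every `γ > 0`, `f(W − γ N G S⁻¹) ≤ f(W) − γ(1 − (Lγ/2)n) N²`; in particular
the step is a descent step whenever `0 < γ < 2/(Ln)`. -/
theorem descent_lemma_nuclear_scaled_polargrad
    {m n : ℕ} (f : Matrix (Fin m) (Fin n) ℝ → ℝ)
    (gradf : Matrix (Fin m) (Fin n) ℝ → Matrix (Fin m) (Fin n) ℝ)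
    (L : ℝ) (hL : 0 < L)
    (hgrad : ∀ W, HasGradientAt f (gradf W) W)
    (hlip : ∀ X Y, ‖gradf X - gradf Y‖ ≤ L * ‖X - Y‖)
    (W G : Matrix (Fin m) (Fin n) ℝ) (hG : G = gradf W)
    (hpd : (Gᵀ * G).PosDef)
    (S : Matrix (Fin n) (Fin n) ℝ) (hS : S.PosSemidef) (hSsq : S * S = Gᵀ * G)
    (N : ℝ) (hN : N = S.trace) :
    ∀ γ : ℝ, 0 < γ →
      f (W - (γ * N) • (G * S⁻¹)) ≤ f W - γ * (1 - L * γ / 2 * (n : ℝ)) * N ^ 2 ∧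
      (γ < 2 / (L * (n : ℝ)) → f (W - (γ * N) • (G * S⁻¹)) ≤ f W) :=
  descent_lemma_nuclear_scaled_polargrad_general f gradf L hgrad hlip W G hG hpd S hS hSsq N hN

end
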